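/- Let (nx, ny, nz) ∈ ℝ³, set γ := √(nx² + ny² + nz²), and let u := exp(i·(nx·σx + ny·σy + nz·σz)) ∈ SU(2). Let C(u) denote the controlled-u gate, i.e., the 4×4 block-diagonal matrix diag(I₂, u), which applies u to the target qubit when the control qubit is in state |1⟩ and acts as the identity otherwise. Then there exist k1, k2 ∈ SU(2) such that C(u) = (I₂ ⊗ k1)·Uf(γ)·(I₂ ⊗ k2); in particular, C(u) is locally equivalent to Uf(γ). -/

import Mathlib

open Matrix Kronecker

noncomputable section

/-- The Pauli matrix `σx`. -/
def σx : Matrix (Fin 2) (Fin 2) ℂ := !![0, 1; 1, 0]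

/-- The Pauli matrix `σy`. -/
def σy : Matrix (Fin 2) (Fin 2) ℂ := !![0, -Complex.I; Complex.I, 0]

/-- The Pauli matrix `σz`. -/
def σz : Matrix (Fin 2) (Fin 2) ℂ := !![1, 0; 0, -1]

/-- Kronecker (tensor) product of two `2×2` matrices, as a `4×4` matrix, with
the standard index identification `(m, n) ↦ 2*m + n`. -/
def tensor (a b : Matrix (Fin 2) (Fin 2) ℂ) : Matrix (Fin 4) (Fin 4) ℂ :=
  Matrix.reindex finProdFinEquiv finProdFinEquiv (a ⊗ₖ b)

/-- `Uf γ = exp(i (γ/2) σz ⊗ σz)`, representing (up to local equivalence) a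
Controlled-`U` gate. -/
def Uf (γ : ℝ) : Matrix (Fin 4) (Fin 4) ℂ :=
  NormedSpace.exp ((((γ : ℂ) / 2) * Complex.I) • tensor σz σz)

/-- The canonical gate
`A c1 c2 c3 = exp(i (c1/2) σx⊗σx) · exp(i (c2/2) σy⊗σy) · exp(i (c3/2) σz⊗σz)`. -/
def A (c1 c2 c3 : ℝ) : Matrix (Fin 4) (Fin 4) ℂ :=
  NormedSpace.exp ((((c1 : ℂ) / 2) * Complex.I) • tensor σx σx) *
    NormedSpace.exp ((((c2 : ℂ) / 2) * Complex.I) • tensor σy σy) *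
    NormedSpace.exp ((((c3 : ℂ) / 2) * Complex.I) • tensor σz σz)

/-- Membership in `SU(2)`: unitary with determinant one. -/
def IsSU2 (k : Matrix (Fin 2) (Fin 2) ℂ) : Prop :=
  k ∈ Matrix.unitaryGroup (Fin 2) ℂ ∧ k.det = 1

/-- Membership in `SU(4)`: unitary with determinant one. -/
def IsSU4 (U : Matrix (Fin 4) (Fin 4) ℂ) : Prop :=
  U ∈ Matrix.unitaryGroup (Fin 4) ℂ ∧ U.det = 1

/-- A local gate is a tensor product `k1 ⊗ k2` of two `SU(2)` gates. -/
def IsLocalGate (k : Matrix (Fin 4) (Fin 4) ℂ) : Prop :=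
  ∃ k1 k2 : Matrix (Fin 2) (Fin 2) ℂ, IsSU2 k1 ∧ IsSU2 k2 ∧ k = tensor k1 k2

/-- `U` and `V` are locally equivalent if `U = e^{iφ} k V k'` for some real `φ`
and local gates `k`, `k'`. -/
def LocallyEquivalent (U V : Matrix (Fin 4) (Fin 4) ℂ) : Prop :=
  ∃ (φ : ℝ) (k k' : Matrix (Fin 4) (Fin 4) ℂ), IsLocalGate k ∧ IsLocalGate k' ∧
    U = Complex.exp (φ * Complex.I) • (k * V * k')

/-- `circuit W k n = k n * W * k (n-1) * W * ⋯ * W * k 0`: the alternating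
circuit consisting of `n` applications of `W` interleaved with the gates `k i`. -/
def circuit (W : Matrix (Fin 4) (Fin 4) ℂ) (k : ℕ → Matrix (Fin 4) (Fin 4) ℂ) :
    ℕ → Matrix (Fin 4) (Fin 4) ℂ
  | 0 => k 0
  | n + 1 => k (n + 1) * W * circuit W k n

/-- `U` is generated by `n` applications of the gate `W` together with local gates:
`U = e^{iφ} · k_n · W · k_{n-1} · W ⋯ W · k_0` for some real `φ` and local gates `k_i`. -/
def GeneratedBy (W : Matrix (Fin 4) (Fin 4) ℂ) (n : ℕ) (U : Matrix (Fin 4) (Fin 4) ℂ) : Prop :=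
  ∃ (φ : ℝ) (k : ℕ → Matrix (Fin 4) (Fin 4) ℂ),
    (∀ i, i ≤ n → IsLocalGate (k i)) ∧ U = Complex.exp (φ * Complex.I) • circuit W k n

/-- The controlled-`u` gate `diag(I₂, u)`, applying `u` to the target qubit when
the control qubit is `|1⟩`. -/
def controlled (u : Matrix (Fin 2) (Fin 2) ℂ) : Matrix (Fin 4) (Fin 4) ℂ :=
  Matrix.reindex finSumFinEquiv finSumFinEquiv
    (Matrix.fromBlocks (1 : Matrix (Fin 2) (Fin 2) ℂ) 0 0 u)

/-! Write `n·σ = -γ k σz k⋆` with `k ∈ SU(2)`: the columns of `k` are normalised eigenvectors of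
`n·σ` for the eigenvalues `-γ` and `γ`. Then `u = k W² k⋆` with `W = exp(-i(γ/2)σz)`. In the
block decomposition along the control qubit, `Uf γ = diag(W⁻¹, W)` and `I₂ ⊗ k = diag(k, k)`, so
`(I₂ ⊗ k) · Uf γ · (I₂ ⊗ W k⋆) = diag(k k⋆, k W² k⋆) = diag(I₂, u) = C(u)`. -/

open Complex NormedSpace

def blockDiag₂ (A D : Matrix (Fin 2) (Fin 2) ℂ) : Matrix (Fin 4) (Fin 4) ℂ :=
  reindex finSumFinEquiv finSumFinEquiv (fromBlocks A 0 0 D)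

lemma controlled_eq_blockDiag₂ (u : Matrix (Fin 2) (Fin 2) ℂ) : controlled u = blockDiag₂ 1 u :=
  rfl

lemma blockDiag₂_mul (A D A' D' : Matrix (Fin 2) (Fin 2) ℂ) :
    blockDiag₂ A D * blockDiag₂ A' D' = blockDiag₂ (A * A') (D * D') := by
  simp only [blockDiag₂, reindex_apply, submatrix_mul_equiv, fromBlocks_multiply, mul_zero,
    zero_mul, add_zero, zero_add]

lemma tensor_one_left (b : Matrix (Fin 2) (Fin 2) ℂ) : tensor 1 b = blockDiag₂ b b := by
  ext i j
  fin_cases i <;> fin_cases j <;> simp [tensor, blockDiag₂, one_apply] <;> rfl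

lemma tensor_σz_σz : tensor σz σz = diagonal ![1, -1, -1, 1] := by
  ext i j
  fin_cases i <;> fin_cases j <;> simp [tensor, σz, finProdFinEquiv, Fin.divNat, Fin.modNat]

lemma σz_eq_diagonal : σz = diagonal ![1, -1] := by
  ext i j
  fin_cases i <;> fin_cases j <;> rfl

lemma exp_smul_σz (c : ℂ) : exp (c • σz) = diagonal ![Complex.exp c, Complex.exp (-c)] := by
  rw [σz_eq_diagonal, ← diagonal_smul, exp_diagonal]
  congr 1
  ext i
  fin_cases i <;> simp [Complex.exp_eq_exp_ℂ]

lemma Uf_eq_blockDiag₂ (γ : ℝ) :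
    Uf γ = blockDiag₂ (exp ((γ / 2 * I : ℂ) • σz)) (exp ((-γ / 2 * I : ℂ) • σz)) := by
  rw [Uf, tensor_σz_σz, ← diagonal_smul, exp_diagonal, exp_smul_σz, exp_smul_σz]
  ext i j
  fin_cases i <;> fin_cases j <;> simp [blockDiag₂, Complex.exp_eq_exp_ℂ, neg_div] <;> rfl

lemma isSU2_one : IsSU2 1 := ⟨one_mem _, det_one⟩

lemma IsSU2.mul {k k' : Matrix (Fin 2) (Fin 2) ℂ} (hk : IsSU2 k) (hk' : IsSU2 k') :
    IsSU2 (k * k') :=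
  ⟨mul_mem hk.1 hk'.1, by rw [det_mul, hk.2, hk'.2, one_mul]⟩

lemma IsSU2.star {k : Matrix (Fin 2) (Fin 2) ℂ} (hk : IsSU2 k) : IsSU2 (star k) :=
  ⟨Unitary.star_mem hk.1, by rw [star_eq_conjTranspose, det_conjTranspose, hk.2, star_one]⟩

lemma isLocalGate_tensor_one {k : Matrix (Fin 2) (Fin 2) ℂ} (hk : IsSU2 k) :
    IsLocalGate (tensor 1 k) :=
  ⟨1, k, isSU2_one, hk, rfl⟩

lemma isSU2_exp_smul_σz {c : ℂ} (hc : c.re = 0) : IsSU2 (exp (c • σz)) := by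
  have hconj : (starRingEnd ℂ) c = -c := by
    apply Complex.ext <;> simp [hc]
  rw [exp_smul_σz]
  refine ⟨?_, ?_⟩
  · rw [mem_unitaryGroup_iff, star_eq_conjTranspose, diagonal_conjTranspose,
      diagonal_mul_diagonal, ← diagonal_one]
    congr 1
    ext i
    fin_cases i <;> simp [← Complex.exp_conj, hconj, ← Complex.exp_add]
  · simp [← Complex.exp_add]

lemma controlled_conj_sq_eq {k W : Matrix (Fin 2) (Fin 2) ℂ} (hk : k * star k = 1)
    (hW : IsUnit W.det) :
    controlled (k * W ^ 2 * star k) = tensor 1 k * blockDiag₂ W⁻¹ W * tensor 1 (W * star k) := by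
  rw [controlled_eq_blockDiag₂, tensor_one_left, tensor_one_left, blockDiag₂_mul, blockDiag₂_mul,
    mul_assoc k W⁻¹, ← mul_assoc W⁻¹, nonsing_inv_mul _ hW, one_mul, hk, sq]
  simp only [mul_assoc]

def pauliVec (nx ny nz : ℝ) : Matrix (Fin 2) (Fin 2) ℂ :=
  (nx : ℂ) • σx + (ny : ℂ) • σy + (nz : ℂ) • σz

def su2Matrix (a b : ℂ) : Matrix (Fin 2) (Fin 2) ℂ :=
  !![a, -(starRingEnd ℂ) b; b, (starRingEnd ℂ) a]

lemma isSU2_su2Matrix {a b : ℂ} (h : normSq a + normSq b = 1) : IsSU2 (su2Matrix a b) := by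
  have h' : (starRingEnd ℂ) a * a + (starRingEnd ℂ) b * b = 1 := by
    rw [mul_comm, mul_conj, mul_comm, mul_conj]; exact_mod_cast h
  refine ⟨?_, ?_⟩
  · rw [mem_unitaryGroup_iff']
    ext i j
    fin_cases i <;> fin_cases j <;> simp [su2Matrix, mul_apply, Fin.sum_univ_two] <;>
      first | ring1 | linear_combination h'
  · rw [su2Matrix, det_fin_two_of]
    linear_combination h'

lemma pauliVec_mul_su2Matrix {nx ny nz γ : ℝ} (hγ2 : γ ^ 2 = nx ^ 2 + ny ^ 2 + nz ^ 2) (r : ℝ) :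
    pauliVec nx ny nz * su2Matrix ((nx - ny * I) / r) (-(γ + nz) / r) =
      (-γ : ℂ) • (su2Matrix ((nx - ny * I) / r) (-(γ + nz) / r) * σz) := by
  have hγ2C : (γ : ℂ) ^ 2 = nx ^ 2 + ny ^ 2 + nz ^ 2 := by exact_mod_cast hγ2
  ext i j
  fin_cases i <;> fin_cases j <;>
    simp [su2Matrix, pauliVec, σx, σy, σz, mul_apply, Fin.sum_univ_two] <;>
    first | ring1 | linear_combination (-hγ2C - ny ^ 2 * I_sq) / r

lemma exists_isSU2_pauliVec_mul_eq {nx ny nz γ : ℝ}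
    (hγ : γ = Real.sqrt (nx ^ 2 + ny ^ 2 + nz ^ 2)) :
    ∃ k, IsSU2 k ∧ pauliVec nx ny nz * k = (-γ : ℂ) • (k * σz) := by
  have hγ0 : 0 ≤ γ := hγ ▸ Real.sqrt_nonneg _
  have hγ2 : γ ^ 2 = nx ^ 2 + ny ^ 2 + nz ^ 2 := hγ ▸ Real.sq_sqrt (by positivity)
  -- `r` normalises the eigenvectors; it vanishes only for `n = (0, 0, -γ)`, where `n·σ = -γ σz`.
  rcases lt_or_ge 0 (γ + nz) with hpos | hle
  · set r := Real.sqrt (2 * γ * (γ + nz))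
    have hr2 : r ^ 2 = 2 * γ * (γ + nz) := Real.sq_sqrt (by positivity)
    have hr : r ≠ 0 := by
      have : 0 < γ := by nlinarith
      positivity
    refine ⟨_, isSU2_su2Matrix ?_, pauliVec_mul_su2Matrix hγ2 r⟩
    rw [normSq_div, normSq_div, normSq_neg, sub_eq_add_neg, ← neg_mul, ← ofReal_neg, ← ofReal_add,
      normSq_add_mul_I, normSq_ofReal, normSq_ofReal, ← add_div, div_eq_one_iff_eq (by positivity)]
    linear_combination -hγ2 - hr2
  · have hnz : nz = -γ := by nlinarith
    have hnx : nx = 0 := by nlinarith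
    have hny : ny = 0 := by nlinarith
    refine ⟨1, isSU2_one, ?_⟩
    simp [pauliVec, hnx, hny, hnz]

lemma exp_I_smul_pauliVec {nx ny nz γ : ℝ} {k : Matrix (Fin 2) (Fin 2) ℂ} (hk : IsSU2 k)
    (h : pauliVec nx ny nz * k = (-γ : ℂ) • (k * σz)) :
    exp (I • pauliVec nx ny nz) = k * exp ((-γ * I : ℂ) • σz) * star k := by
  have hk1 : k * star k = 1 := mem_unitaryGroup_iff.1 hk.1
  have hinv : k⁻¹ = star k := inv_eq_right_inv hk1
  have hunit : IsUnit k := (isUnit_iff_isUnit_det k).2 (hk.2 ▸ isUnit_one)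
  have hconj : I • pauliVec nx ny nz = k * ((-γ * I : ℂ) • σz) * k⁻¹ := by
    rw [hinv, ← mul_one (pauliVec _ _ _), ← hk1, ← mul_assoc, h, mul_smul_comm, smul_mul_assoc,
      smul_mul_assoc, smul_smul, mul_comm I]
  rw [hconj, exp_conj _ _ hunit, hinv]

/-- For `u = exp(i(nx σx + ny σy + nz σz))` and `γ = √(nx² + ny² + nz²)`, there are
`k1, k2 ∈ SU(2)` with `C(u) = (I₂ ⊗ k1) · Uf γ · (I₂ ⊗ k2)`; in particular `C(u)`
is locally equivalent to `Uf γ`. -/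
theorem stmt19 (nx ny nz γ : ℝ) (hγ : γ = Real.sqrt (nx ^ 2 + ny ^ 2 + nz ^ 2))
    (u : Matrix (Fin 2) (Fin 2) ℂ)
    (hu : u = NormedSpace.exp
      (Complex.I • (((nx : ℝ) : ℂ) • σx + ((ny : ℝ) : ℂ) • σy + ((nz : ℝ) : ℂ) • σz))) :
    (∃ k1 k2 : Matrix (Fin 2) (Fin 2) ℂ, IsSU2 k1 ∧ IsSU2 k2 ∧
      controlled u = tensor 1 k1 * Uf γ * tensor 1 k2) ∧
    LocallyEquivalent (controlled u) (Uf γ) := by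
  obtain ⟨k, hk, hpauli⟩ := exists_isSU2_pauliVec_mul_eq hγ
  set W := exp ((-γ / 2 * I : ℂ) • σz)
  have hW : IsSU2 W := isSU2_exp_smul_σz (by simp)
  have hWinv : W⁻¹ = exp ((γ / 2 * I : ℂ) • σz) := by
    rw [← Matrix.exp_neg, ← neg_smul]
    congr 2
    ring
  have hW2 : W ^ 2 = exp ((-γ * I : ℂ) • σz) := by
    rw [← Matrix.exp_nsmul, two_nsmul, ← add_smul]
    congr 2
    ring
  have hu' : u = k * W ^ 2 * star k := by
    rw [hW2, ← exp_I_smul_pauliVec hk hpauli, hu]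
    rfl
  have key : controlled u = tensor 1 k * Uf γ * tensor 1 (W * star k) := by
    rw [Uf_eq_blockDiag₂, ← hWinv, hu']
    exact controlled_conj_sq_eq (mem_unitaryGroup_iff.1 hk.1) (hW.2 ▸ isUnit_one)
  have hk2 : IsSU2 (W * star k) := hW.mul hk.star
  refine ⟨⟨k, W * star k, hk, hk2, key⟩, 0, _, _, isLocalGate_tensor_one hk,
    isLocalGate_tensor_one hk2, ?_⟩
  simp [key]
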